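/- Let K be a compact subset of a Banach space X, φ : ℕ → ℝ nonnegative, and γ_n = 2^{φ(n)}. Suppose d_n^{γ_n}(K)_X = 0 for some n. Then for every integer k > φ(n), one has ε_{nk}(K)_X ≤ 6·2^{φ(n)−k}. -/

import Mathlib

/-- `N` is a norm on `ℝ^n`. -/
def IsNorm {n : ℕ} (N : (Fin n → ℝ) → ℝ) : Prop :=
  (∀ y, N y = 0 ↔ y = 0) ∧ (∀ (a : ℝ) (y), N (a • y) = |a| * N y) ∧
    (∀ y z, N (y + z) ≤ N y + N z)

variable {X : Type*} [NormedAddCommGroup X] [NormedSpace ℝ X] [CompleteSpace X]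

/-- The fixed Lipschitz width `d^γ(K, Y_n)_X` for the norm `N` on `ℝ^n`. -/
noncomputable def fixedLipWidth {n : ℕ} (K : Set X) (N : (Fin n → ℝ) → ℝ) (γ : ℝ) : ℝ :=
  ⨅ L : {L : (Fin n → ℝ) → X //
      ∀ y y', N y ≤ 1 → N y' ≤ 1 → ‖L y - L y'‖ ≤ γ * N (y - y')},
    ⨆ f : K, ⨅ y : {y : Fin n → ℝ // N y ≤ 1}, ‖(f : X) - L.1 y.1‖

/-- The Lipschitz width `d_n^γ(K)_X`. -/
noncomputable def lipWidth (K : Set X) (n : ℕ) (γ : ℝ) : ℝ :=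
  ⨅ N : {N : (Fin n → ℝ) → ℝ // IsNorm N}, fixedLipWidth K N.1 γ

/-- The entropy number `ε_n(K)_X`. -/
noncomputable def entropyNum (K : Set X) (n : ℕ) : ℝ :=
  sInf {ε : ℝ | 0 < ε ∧ ∃ g : Fin (2 ^ n) → X, K ⊆ ⋃ j, Metric.closedBall (g j) ε}

/-- The Chebyshev radius of `K`. -/
noncomputable def chebRad (K : Set X) : ℝ :=
  ⨅ g : X, ⨆ f : K, ‖g - (f : X)‖

/-! As `lipWidth K n γ = 0 < ε` with `ε = 2^(φ n - k)`, there are a norm `N` on `ℝⁿ` and a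
`γ`-Lipschitz map `L` on its unit ball whose image approximates `K` within `ε`. Comparing volumes of
disjoint balls, the unit ball of any norm on `ℝⁿ` is covered by `(1 + 2/δ)ⁿ ≤ 2^(n k)` balls of
radius `δ = 4 · 2^(-k)`; the images of their centres under `L` are the centres of `2^(n k)` balls
of radius `ε + γ δ = 5 ε` covering `K`. -/

open Metric Set MeasureTheory Module
open scoped ENNReal NNReal

section Packing

variable {E : Type*} [NormedAddCommGroup E] [NormedSpace ℝ E] [FiniteDimensional ℝ E]

theorem Finset.card_le_of_isSeparated_of_subset_closedBall {δ : ℝ≥0} (hδ : 0 < δ)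
    {s : Finset E} (hs : (s : Set E) ⊆ closedBall 0 1) (hsep : IsSeparated δ (s : Set E)) :
    (s.card : ℝ) ≤ (1 + 2 / δ) ^ finrank ℝ E := by
  borelize E
  let μ : Measure E := .addHaar
  have volume_ball (x : E) {r : ℝ} (hr : 0 < r) :
      μ.real (ball x r) = r ^ finrank ℝ E * μ.real (ball 0 1) := by
    simp [measureReal_def, μ.addHaar_ball_of_pos _ hr, hr.le]
  have hδ2 : (0 : ℝ) < δ / 2 := by positivity
  have hdisj : (s : Set E).PairwiseDisjoint fun c => ball c (δ / 2) := by
    intro c hc c' hc' hne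
    refine ball_disjoint_ball ?_
    have : (δ : ℝ) < dist c c' := by
      have h : (δ : ℝ≥0∞) < edist c c' := hsep hc hc' hne
      rw [edist_nndist, ENNReal.coe_lt_coe] at h
      exact_mod_cast h
    linarith
  have hsub : (⋃ c ∈ s, ball c (δ / 2)) ⊆ ball (0 : E) (1 + δ / 2) :=
    iUnion₂_subset fun c hc => ball_subset_ball' (by simpa [add_comm] using hs hc)
  have key : (s.card : ℝ) * (δ / 2) ^ finrank ℝ E * μ.real (ball 0 1) ≤
      (1 + δ / 2) ^ finrank ℝ E * μ.real (ball 0 1) := by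
    calc (s.card : ℝ) * (δ / 2) ^ finrank ℝ E * μ.real (ball 0 1)
        = μ.real (⋃ c ∈ s, ball c (δ / 2)) := by
          rw [measureReal_biUnion_finset hdisj fun _ _ => measurableSet_ball]
          simp [volume_ball _ hδ2, mul_assoc]
      _ ≤ μ.real (ball (0 : E) (1 + δ / 2)) := measureReal_mono hsub
      _ = (1 + δ / 2) ^ finrank ℝ E * μ.real (ball 0 1) := volume_ball 0 (by positivity)
  have hV : 0 < μ.real (ball (0 : E) 1) :=
    ENNReal.toReal_pos (measure_ball_pos μ 0 one_pos).ne' measure_ball_lt_top.ne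
  calc (s.card : ℝ) ≤ (1 + δ / 2) ^ finrank ℝ E / (δ / 2) ^ finrank ℝ E := by
        rw [le_div_iff₀ (by positivity)]
        exact le_of_mul_le_mul_right key hV
    _ = (1 + 2 / δ) ^ finrank ℝ E := by
        rw [← div_pow]
        congr 1
        field_simp
        ring

theorem encard_le_of_isSeparated_of_subset_closedBall {δ : ℝ≥0} (hδ : 0 < δ) {C : Set E}
    (hC : C ⊆ closedBall 0 1) (hsep : IsSeparated δ C) :
    C.encard ≤ ⌊(1 + 2 / (δ : ℝ)) ^ finrank ℝ E⌋₊ := by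
  by_contra! hlt
  obtain ⟨t, htC, ht⟩ := exists_subset_encard_eq (Order.add_one_le_of_lt hlt)
  have htfin : t.Finite := finite_of_encard_eq_coe ht
  have hcard := htfin.toFinset.card_le_of_isSeparated_of_subset_closedBall hδ
    (by simpa using htC.trans hC) (by simpa using hsep.subset htC)
  rw [htfin.encard_eq_coe_toFinset_card] at ht
  have ht' : htfin.toFinset.card = ⌊(1 + 2 / (δ : ℝ)) ^ finrank ℝ E⌋₊ + 1 := by exact_mod_cast ht
  rw [ht'] at hcard
  push_cast at hcard
  linarith [Nat.lt_floor_add_one ((1 + 2 / (δ : ℝ)) ^ finrank ℝ E)]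

theorem exists_isCover_closedBall {δ : ℝ≥0} (hδ : 0 < δ) :
    ∃ C ⊆ closedBall (0 : E) 1, C.encard ≤ ⌊(1 + 2 / (δ : ℝ)) ^ finrank ℝ E⌋₊ ∧
      IsCover δ (closedBall 0 1) C := by
  have hpack : packingNumber δ (closedBall (0 : E) 1) ≤ ⌊(1 + 2 / (δ : ℝ)) ^ finrank ℝ E⌋₊ :=
    iSup₂_le fun C hC => iSup_le fun hsep =>
      encard_le_of_isSeparated_of_subset_closedBall hδ hC hsep
  have hfin : packingNumber δ (closedBall (0 : E) 1) ≠ ⊤ := ne_top_of_le_ne_top (by simp) hpack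
  exact ⟨_, maximalSeparatedSet_subset, (encard_maximalSeparatedSet hfin).trans_le hpack,
    isCover_maximalSeparatedSet hfin⟩

end Packing

namespace IsNorm

variable {n : ℕ} {N : (Fin n → ℝ) → ℝ}

theorem map_zero (hN : IsNorm N) : N 0 = 0 := (hN.1 0).2 rfl

theorem map_neg (hN : IsNorm N) (y : Fin n → ℝ) : N (-y) = N y := by
  simpa using hN.2.1 (-1) y

theorem nonneg (hN : IsNorm N) (y : Fin n → ℝ) : 0 ≤ N y := by
  have := hN.2.2 y (-y)
  rw [add_neg_cancel, hN.map_zero, hN.map_neg] at this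
  linarith

/-- A copy of `Fin n → ℝ` on which the norm `N` can be installed in place of the sup norm. -/
def Space (_N : (Fin n → ℝ) → ℝ) : Type := Fin n → ℝ

instance : AddCommGroup (Space N) := inferInstanceAs (AddCommGroup (Fin n → ℝ))

abbrev toAddGroupNorm (hN : IsNorm N) : AddGroupNorm (Space N) where
  toFun := N
  map_zero' := hN.map_zero
  add_le' := hN.2.2
  neg' := hN.map_neg
  eq_zero_of_map_eq_zero' y := (hN.1 y).1

theorem exists_cover (hN : IsNorm N) {δ : ℝ} (hδ : 0 < δ) :
    ∃ C : Set (Fin n → ℝ), C.encard ≤ ⌊(1 + 2 / δ) ^ n⌋₊ ∧ (∀ c ∈ C, N c ≤ 1) ∧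
      ∀ y, N y ≤ 1 → ∃ c ∈ C, N (y - c) ≤ δ := by
  let _ : NormedAddCommGroup (Space N) := hN.toAddGroupNorm.toNormedAddCommGroup
  let _ : NormedSpace ℝ (Space N) :=
    { (inferInstance : Module ℝ (Fin n → ℝ)) with norm_smul_le := fun a y => (hN.2.1 a y).le }
  have _ : FiniteDimensional ℝ (Space N) := inferInstanceAs (FiniteDimensional ℝ (Fin n → ℝ))
  have hdim : finrank ℝ (Space N) = n := finrank_fin_fun ℝ
  obtain ⟨C, hCball, hCcard, hCcov⟩ :=
    exists_isCover_closedBall (E := Space N) (δ := δ.toNNReal) (Real.toNNReal_pos.2 hδ)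
  rw [hdim, Real.coe_toNNReal _ hδ.le] at hCcard
  refine ⟨C, hCcard, fun c hc => mem_closedBall_zero_iff.1 (hCball hc), fun y hy => ?_⟩
  -- `edist` must be taken in `Space N`, not in the sup norm of `Fin n → ℝ`
  let y' : Space N := y
  obtain ⟨c, hc, hyc⟩ := hCcov (x := y') (mem_closedBall_zero_iff.2 hy)
  simp only [mem_ofPred_eq] at hyc
  rw [edist_le_coe, ← NNReal.coe_le_coe, coe_nndist, dist_eq_norm,
    Real.coe_toNNReal _ hδ.le] at hyc
  exact ⟨c, hc, hyc⟩

end IsNorm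

instance {n : ℕ} : Nonempty {N : (Fin n → ℝ) → ℝ // IsNorm N} :=
  ⟨⟨(‖·‖), fun _ => norm_eq_zero, fun a y => by simp [norm_smul], norm_add_le⟩⟩

section Widths

variable {E : Type*} [NormedAddCommGroup E] {K : Set E} {n : ℕ} {N : (Fin n → ℝ) → ℝ} {γ ε : ℝ}

theorem exists_approx_of_fixedLipWidth_lt (hK : Bornology.IsBounded K) (hN : IsNorm N)
    (hγ : 0 ≤ γ) (h : fixedLipWidth K N γ < ε) :
    ∃ L : (Fin n → ℝ) → E, (∀ y y', N y ≤ 1 → N y' ≤ 1 → ‖L y - L y'‖ ≤ γ * N (y - y')) ∧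
      ∀ f ∈ K, ∃ y, N y ≤ 1 ∧ ‖f - L y‖ < ε := by
  have : Nonempty {L : (Fin n → ℝ) → E //
      ∀ y y', N y ≤ 1 → N y' ≤ 1 → ‖L y - L y'‖ ≤ γ * N (y - y')} :=
    ⟨⟨0, fun y y' _ _ => by simpa using mul_nonneg hγ (hN.nonneg (y - y'))⟩⟩
  have : Nonempty {y : Fin n → ℝ // N y ≤ 1} := ⟨⟨0, by simp [hN.map_zero]⟩⟩
  obtain ⟨⟨L, hL⟩, hLε⟩ := exists_lt_of_ciInf_lt h
  obtain ⟨R, hR⟩ := hK.exists_norm_le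
  have hbdd :
      BddAbove (range fun f : K => ⨅ y : {y : Fin n → ℝ // N y ≤ 1}, ‖(f : E) - L y‖) := by
    refine ⟨R + ‖L 0‖, forall_mem_range.2 fun f => ?_⟩
    calc ⨅ y : {y : Fin n → ℝ // N y ≤ 1}, ‖(f : E) - L y‖ ≤ ‖(f : E) - L 0‖ :=
          ciInf_le ⟨0, forall_mem_range.2 fun _ => norm_nonneg _⟩
            (⟨0, by simp [hN.map_zero]⟩ : {y : Fin n → ℝ // N y ≤ 1})
      _ ≤ R + ‖L 0‖ := (norm_sub_le _ _).trans (by linarith [hR f f.2])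
  refine ⟨L, hL, fun f hf => ?_⟩
  obtain ⟨⟨y, hy⟩, hfy⟩ := exists_lt_of_ciInf_lt ((le_ciSup hbdd ⟨f, hf⟩).trans_lt hLε)
  exact ⟨y, hy, hfy⟩

theorem exists_approx_of_lipWidth_lt (hK : Bornology.IsBounded K) (hγ : 0 ≤ γ)
    (h : lipWidth K n γ < ε) :
    ∃ N : (Fin n → ℝ) → ℝ, IsNorm N ∧ ∃ L : (Fin n → ℝ) → E,
      (∀ y y', N y ≤ 1 → N y' ≤ 1 → ‖L y - L y'‖ ≤ γ * N (y - y')) ∧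
      ∀ f ∈ K, ∃ y, N y ≤ 1 ∧ ‖f - L y‖ < ε := by
  obtain ⟨⟨N, hN⟩, hNε⟩ := exists_lt_of_ciInf_lt h
  exact ⟨N, hN, exists_approx_of_fixedLipWidth_lt hK hN hγ hNε⟩

theorem subset_biUnion_closedBall_image {L : (Fin n → ℝ) → E} {C : Set (Fin n → ℝ)} {δ : ℝ}
    (hγ : 0 ≤ γ) (hL : ∀ y y', N y ≤ 1 → N y' ≤ 1 → ‖L y - L y'‖ ≤ γ * N (y - y'))
    (hK : ∀ f ∈ K, ∃ y, N y ≤ 1 ∧ ‖f - L y‖ < ε) (hCball : ∀ c ∈ C, N c ≤ 1)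
    (hC : ∀ y, N y ≤ 1 → ∃ c ∈ C, N (y - c) ≤ δ) :
    K ⊆ ⋃ c ∈ L '' C, closedBall c (ε + γ * δ) := by
  intro f hf
  obtain ⟨y, hy, hfy⟩ := hK f hf
  obtain ⟨c, hc, hyc⟩ := hC y hy
  refine mem_biUnion (mem_image_of_mem L hc) (mem_closedBall_iff_norm.2 ?_)
  calc ‖f - L c‖ ≤ ‖f - L y‖ + ‖L y - L c‖ := norm_sub_le_norm_sub_add_norm_sub _ _ _
    _ ≤ ε + γ * δ := add_le_add hfy.le ((hL y c hy (hCball c hc)).trans (by gcongr))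

theorem entropyNum_le_of_subset_biUnion_closedBall {C : Set E} {m : ℕ} (hε : 0 < ε)
    (hC : C.encard ≤ 2 ^ m) (hK : K ⊆ ⋃ c ∈ C, closedBall c ε) : entropyNum K m ≤ ε := by
  have hCfin : C.Finite := finite_of_encard_le_coe (k := 2 ^ m) (by simpa using hC)
  obtain ⟨f, -, hf⟩ :=
    hCfin.exists_injOn_of_encard_le (t := (univ : Set (Fin (2 ^ m)))) (by simpa using hC)
  refine csInf_le ⟨0, fun _ h => h.1.le⟩ ⟨hε, Function.invFunOn f C, fun x hx => ?_⟩
  obtain ⟨c, hc, hxc⟩ := mem_iUnion₂.1 (hK hx)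
  exact mem_iUnion.2 ⟨f c, by rwa [hf.leftInvOn_invFunOn hc]⟩

end Widths

/-- if `d_n^{2^{φ(n)}}(K)_X = 0` then `ε_{nk}(K)_X ≤ 6 · 2^{φ(n) - k}`
for every integer `k > φ(n)`. -/
theorem entropy_bound_of_lipWidth_eq_zero (K : Set X) (hK : IsCompact K)
    (φ : ℕ → ℝ) (hφ : ∀ n, 0 ≤ φ n) (n : ℕ)
    (h0 : lipWidth K n ((2 : ℝ) ^ φ n) = 0) :
    ∀ k : ℕ, φ n < k → entropyNum K (n * k) ≤ 6 * (2 : ℝ) ^ (φ n - (k : ℝ)) := by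
  intro k hk
  have hk1 : 1 ≤ k := by exact_mod_cast (hφ n).trans_lt hk
  set ε : ℝ := 2 ^ (φ n - k) with hε
  set δ : ℝ := 4 / 2 ^ k with hδ
  have hγδ : 2 ^ φ n * δ = 4 * ε := by
    rw [hε, hδ, Real.rpow_sub two_pos, Real.rpow_natCast]
    ring
  have hbase : 1 + 2 / δ ≤ 2 ^ k := by
    have : (2 : ℝ) ≤ 2 ^ k := by simpa using pow_le_pow_right₀ one_le_two hk1
    rw [hδ, div_div_eq_mul_div]
    linarith
  obtain ⟨N, hN, L, hL, hLK⟩ := exists_approx_of_lipWidth_lt hK.isBounded (by positivity)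
    (h0.trans_lt (by positivity : (0 : ℝ) < ε))
  obtain ⟨C, hCcard, hCball, hC⟩ := hN.exists_cover (by positivity : 0 < δ)
  have hcard : (L '' C).encard ≤ 2 ^ (n * k) := by
    refine (encard_image_le L C).trans (hCcard.trans ?_)
    have : (1 + 2 / δ) ^ n ≤ (2 ^ (n * k) : ℕ) := by
      push_cast
      rw [mul_comm, pow_mul]
      gcongr
    exact_mod_cast Nat.floor_le_of_le this
  calc entropyNum K (n * k) ≤ ε + 2 ^ φ n * δ :=
        entropyNum_le_of_subset_biUnion_closedBall (by positivity) hcard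
          (subset_biUnion_closedBall_image (by positivity) hL hLK hCball hC)
    _ ≤ 6 * ε := by rw [hγδ]; linarith [show 0 < ε by positivity]
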